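/- arXiv:1303.7122 — 2 statements merged into one kernel-verified Lean document; each statement's English description precedes it below -/
import Mathlib

section
/- Let A = {1,...,n}, A' = {1,...,2n}, T as above, G' := {Z^a : a ∈ A} with Z^a := {2a} ∪ {2b−1 : b ≥ a}. For families H, K of subsets of A, let H' := {T(X) : X ∈ H} and K' := {T(Y) : Y ∈ K}. Then ν(H) ⊆ τ(K) if and only if ν'(H' ∪ G') ⊆ τ'(K' ∪ G'); i.e., the pair (H, K) is coherent iff the pair (H' ∪ G', K' ∪ G') is coherent with respect to the shift order. -/
def grnd (n : ℕ) : Finset ℕ := Finset.Icc 1 n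

def cnt (X : Finset ℕ) (a : ℕ) : ℕ := (X.filter (fun b => a ≤ b)).card

def shiftLE (n : ℕ) (X Z : Finset ℕ) : Prop :=
  ∀ a ∈ grnd n, cnt X a ≤ cnt Z a

def Tmap (n : ℕ) (X : Finset ℕ) : Finset ℕ :=
  X.image (fun a => 2 * a) ∪ (grnd n \ X).image (fun a => 2 * a - 1)

def Zset (n a : ℕ) : Finset ℕ :=
  insert (2 * a) ((Finset.Icc a n).image (fun b => 2 * b - 1))

def Gfam (n : ℕ) : Set (Finset ℕ) := {Z | ∃ a ∈ grnd n, Z = Zset n a}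

/-- ν over A (ordinary inclusion), within P(A). -/
def nuA (n : ℕ) (H : Set (Finset ℕ)) : Set (Finset ℕ) :=
  {Z | Z ⊆ grnd n ∧ ∃ X ∈ H, X ⊆ Z}

/-- τ over A (ordinary inclusion), within P(A). -/
def tauA (n : ℕ) (K : Set (Finset ℕ)) : Set (Finset ℕ) :=
  {Z | Z ⊆ grnd n ∧ ∀ Y ∈ K, (Y ∩ Z).Nonempty}

def nu' (m : ℕ) (H : Set (Finset ℕ)) : Set (Finset ℕ) :=
  {Z | Z ⊆ grnd m ∧ ∃ X ∈ H, shiftLE m X Z}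

def tau' (m : ℕ) (K : Set (Finset ℕ)) : Set (Finset ℕ) :=
  {Z | Z ⊆ grnd m ∧ ∀ Y ∈ K, ¬ shiftLE m Y (grnd m \ Z)}

namespace Stmt18aux
open Finset

/-- card of a filter is monotone in the set -/
lemma fcard_mono (p : ℕ → Prop) [DecidablePred p] {X Z : Finset ℕ} (h : X ⊆ Z) :
    (X.filter p).card ≤ (Z.filter p).card :=
  card_le_card (filter_subset_filter _ h)

lemma fcard_union (p : ℕ → Prop) [DecidablePred p] {A B : Finset ℕ} (h : Disjoint A B) :
    ((A ∪ B).filter p).card = (A.filter p).card + (B.filter p).card := by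
  rw [filter_union, card_union_of_disjoint
    (h.mono (filter_subset _ _) (filter_subset _ _))]

lemma fcard_sdiff_add (p : ℕ → Prop) [DecidablePred p] {Z S : Finset ℕ} (h : Z ⊆ S) :
    (Z.filter p).card + ((S \ Z).filter p).card = (S.filter p).card := by
  rw [← fcard_union p disjoint_sdiff, union_sdiff_of_subset h]

def cntE (X : Finset ℕ) (t : ℕ) : ℕ := (X.filter (fun b => t ≤ 2*b)).card
def cntO (X : Finset ℕ) (t : ℕ) : ℕ := (X.filter (fun b => t ≤ 2*b - 1)).card

lemma cnt_image {S : Finset ℕ} {f : ℕ → ℕ} (hf : Set.InjOn f S) (t : ℕ) :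
    cnt (S.image f) t = (S.filter (fun b => t ≤ f b)).card := by
  unfold cnt
  rw [filter_image]
  exact card_image_of_injOn (hf.mono (by exact_mod_cast filter_subset _ S))

lemma cnt_mono {X Z : Finset ℕ} (h : X ⊆ Z) (t : ℕ) : cnt X t ≤ cnt Z t :=
  fcard_mono _ h

lemma cnt_sdiff_add {Z S : Finset ℕ} (h : Z ⊆ S) (t : ℕ) :
    cnt Z t + cnt (S \ Z) t = cnt S t :=
  fcard_sdiff_add _ h

lemma cntO_le_cntE (X : Finset ℕ) (t : ℕ) : cntO X t ≤ cntE X t := by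
  apply card_le_card
  apply monotone_filter_right
  intro b hb
  omega

lemma cnt_Tmap {n : ℕ} (X : Finset ℕ) (t : ℕ) :
    cnt (Tmap n X) t = cntE X t + cntO (grnd n \ X) t := by
  unfold Tmap
  rw [cnt, filter_union, card_union_of_disjoint, ← cnt, ← cnt, cnt_image, cnt_image]
  · rfl
  · intro a _ b hb hab
    simp only [grnd, mem_coe, mem_sdiff, mem_Icc] at hb
    simp only [] at hab
    omega
  · intro a _ b _ hab; simp only [] at hab; omega
  · apply Disjoint.mono (filter_subset _ _) (filter_subset _ _)
    rw [disjoint_left]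
    rintro z hz1 hz2
    simp only [mem_image, mem_sdiff, grnd, mem_Icc] at hz1 hz2
    obtain ⟨a, _, rfl⟩ := hz1
    obtain ⟨b, hb, hba⟩ := hz2
    omega

lemma grnd_two (n : ℕ) :
    grnd (2*n) = (grnd n).image (fun b => 2*b) ∪ (grnd n).image (fun b => 2*b - 1) := by
  ext z
  simp only [grnd, mem_Icc, mem_union, mem_image]
  constructor
  · intro h
    rcases Nat.even_or_odd z with ⟨c, hc⟩ | ⟨c, hc⟩
    · exact Or.inl ⟨c, by omega, by omega⟩
    · exact Or.inr ⟨c + 1, by omega, by omega⟩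
  · rintro (⟨a, ha, rfl⟩ | ⟨a, ha, rfl⟩) <;> omega

lemma cnt_grnd2 (n t : ℕ) :
    cnt (grnd (2*n)) t = cntE (grnd n) t + cntO (grnd n) t := by
  rw [grnd_two, cnt, filter_union, card_union_of_disjoint, ← cnt, ← cnt,
    cnt_image, cnt_image]
  · rfl
  · intro a ha b hb hab
    simp only [grnd, mem_coe, mem_Icc] at ha hb
    simp only [] at hab
    omega
  · intro a _ b _ hab; simp only [] at hab; omega
  · apply Disjoint.mono (filter_subset _ _) (filter_subset _ _)
    rw [disjoint_left]
    rintro z hz1 hz2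
    simp only [mem_image, grnd, mem_Icc] at hz1 hz2
    obtain ⟨a, ha, rfl⟩ := hz1
    obtain ⟨b, hb, hba⟩ := hz2
    omega

lemma cnt_grnd {m t : ℕ} (h1 : 1 ≤ t) : cnt (grnd m) t = m + 1 - t := by
  rw [cnt]
  have : (grnd m).filter (fun b => t ≤ b) = Finset.Icc t m := by
    ext b; simp only [grnd, mem_filter, mem_Icc]; omega
  rw [this, Nat.card_Icc]

lemma cnt_Zset {n a : ℕ} (ha : 1 ≤ a) (t : ℕ) :
    cnt (Zset n a) t = (if t ≤ 2*a then 1 else 0) + cntO (Finset.Icc a n) t := by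
  have hnm : 2*a ∉ (Finset.Icc a n).image (fun b => 2*b - 1) := by
    simp only [mem_image, mem_Icc]
    rintro ⟨b, hb, hba⟩; omega
  have himg : cnt ((Finset.Icc a n).image (fun b => 2*b - 1)) t
      = cntO (Finset.Icc a n) t := by
    apply cnt_image
    intro x hx y hy hxy
    simp only [coe_Icc, Set.mem_Icc] at hx hy
    simp only [] at hxy
    omega
  rw [Zset, cnt, filter_insert]
  split_ifs with h
  · rw [card_insert_of_notMem (fun hc => hnm (filter_subset _ _ hc)), ← cnt, himg]
    omega
  · rw [← cnt, himg]; omega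

lemma Tmap_subset_grnd {n : ℕ} {X : Finset ℕ} (hX : X ⊆ grnd n) :
    Tmap n X ⊆ grnd (2*n) := by
  intro z hz
  simp only [Tmap, mem_union, mem_image, mem_sdiff] at hz
  simp only [grnd, mem_Icc]
  rcases hz with ⟨a, ha, rfl⟩ | ⟨a, ⟨ha, _⟩, rfl⟩
  · have := hX ha; simp only [grnd, mem_Icc] at this; omega
  · simp only [grnd, mem_Icc] at ha; omega

lemma Zset_subset_grnd {n a : ℕ} (ha : a ∈ grnd n) : Zset n a ⊆ grnd (2*n) := by
  simp only [grnd, mem_Icc] at ha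
  intro z hz
  simp only [Zset, mem_insert, mem_image, mem_Icc] at hz
  simp only [grnd, mem_Icc]
  rcases hz with rfl | ⟨b, hb, rfl⟩ <;> omega

lemma sdiff_sdiff_eq {X S : Finset ℕ} (hX : X ⊆ S) : S \ (S \ X) = X := by
  rw [sdiff_sdiff_right_self, inf_eq_inter, inter_eq_right.mpr hX]

lemma Tmap_mono {n : ℕ} {X X' : Finset ℕ} (hX' : X' ⊆ grnd n) (h : X ⊆ X') (t : ℕ) :
    cnt (Tmap n X) t ≤ cnt (Tmap n X') t := by
  rw [cnt_Tmap, cnt_Tmap]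
  have h1 : cntE X t + cntE (X' \ X) t = cntE X' t := fcard_sdiff_add _ h
  have hsub : grnd n \ X' ⊆ grnd n \ X := sdiff_subset_sdiff (le_refl _) h
  have h2 : cntO (grnd n \ X') t + cntO ((grnd n \ X) \ (grnd n \ X')) t
      = cntO (grnd n \ X) t := fcard_sdiff_add _ hsub
  have h3 : (grnd n \ X) \ (grnd n \ X') = X' \ X := by
    ext b
    simp only [mem_sdiff, not_and, not_not]
    constructor
    · rintro ⟨⟨hG, hX1⟩, h2'⟩; exact ⟨h2' hG, hX1⟩
    · rintro ⟨h1', h2'⟩; exact ⟨⟨hX' h1', h2'⟩, fun _ => h1'⟩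
  rw [h3] at h2
  have h4 := cntO_le_cntE (X' \ X) t
  omega

lemma Tmap_compl {n : ℕ} {X : Finset ℕ} (hX : X ⊆ grnd n) (t : ℕ) :
    cnt (Tmap n X) t + cnt (Tmap n (grnd n \ X)) t = cnt (grnd (2*n)) t := by
  rw [cnt_Tmap, cnt_Tmap, sdiff_sdiff_eq hX, cnt_grnd2]
  have h1 : cntE X t + cntE (grnd n \ X) t = cntE (grnd n) t := fcard_sdiff_add _ hX
  have h2 : cntO X t + cntO (grnd n \ X) t = cntO (grnd n) t := fcard_sdiff_add _ hX
  omega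

end Stmt18aux
namespace Stmt18aux
open Finset

lemma cntO_Icc {a n c t : ℕ} (hac : a ≤ c)
    (ht : ∀ b, a ≤ b → (t ≤ 2*b - 1 ↔ c ≤ b)) :
    cntO (Finset.Icc a n) t = n + 1 - c := by
  rw [cntO]
  have heq : (Finset.Icc a n).filter (fun b => t ≤ 2*b - 1) = Finset.Icc c n := by
    ext b
    simp only [mem_filter, mem_Icc]
    constructor
    · rintro ⟨⟨h1, h2⟩, h3⟩; exact ⟨(ht b h1).1 h3, h2⟩
    · rintro ⟨h1, h2⟩; exact ⟨⟨hac.trans h1, h2⟩, (ht b (hac.trans h1)).2 h1⟩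
  rw [heq, Nat.card_Icc]

lemma le_card_add_card {A B C : Finset ℕ} (h : C ⊆ A ∪ B) :
    C.card ≤ A.card + B.card :=
  (card_le_card h).trans (card_union_le _ _)

lemma cnt_Tmap_ge_odd {n : ℕ} {X : Finset ℕ} {a : ℕ} (ha : a ∈ grnd n) :
    n + 1 - a ≤ cnt (Tmap n X) (2*a - 1) := by
  simp only [grnd, mem_Icc] at ha
  rw [cnt_Tmap]
  have hsub : Finset.Icc a n ⊆
      X.filter (fun b => 2*a - 1 ≤ 2*b) ∪
      (grnd n \ X).filter (fun b => 2*a - 1 ≤ 2*b - 1) := by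
    intro b hb
    simp only [mem_Icc] at hb
    by_cases hbX : b ∈ X
    · exact mem_union_left _ (mem_filter.mpr ⟨hbX, by omega⟩)
    · refine mem_union_right _ (mem_filter.mpr ⟨mem_sdiff.mpr ⟨?_, hbX⟩, by omega⟩)
      simp only [grnd, mem_Icc]; omega
  have := le_card_add_card hsub
  rw [Nat.card_Icc] at this
  exact this

lemma cnt_Tmap_ge_even {n : ℕ} {X : Finset ℕ} {c : ℕ} (hc : c ∈ grnd n)
    (hcX : c ∈ X) : n + 1 - c ≤ cnt (Tmap n X) (2*c) := by
  simp only [grnd, mem_Icc] at hc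
  rw [cnt_Tmap]
  have hsub : Finset.Icc c n ⊆
      X.filter (fun b => 2*c ≤ 2*b) ∪
      (grnd n \ X).filter (fun b => 2*c ≤ 2*b - 1) := by
    intro b hb
    simp only [mem_Icc] at hb
    by_cases hbX : b ∈ X
    · exact mem_union_left _ (mem_filter.mpr ⟨hbX, by omega⟩)
    · have hbc : b ≠ c := fun h => hbX (h ▸ hcX)
      refine mem_union_right _ (mem_filter.mpr ⟨mem_sdiff.mpr ⟨?_, hbX⟩, by omega⟩)
      simp only [grnd, mem_Icc]; omega
  have := le_card_add_card hsub
  rw [Nat.card_Icc] at this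
  exact this

lemma caseTT {n : ℕ} {X Y : Finset ℕ} (hX : X ⊆ grnd n) (hY : Y ⊆ grnd n) :
    (∃ t ∈ grnd (2*n), cnt (grnd (2*n)) t < cnt (Tmap n X) t + cnt (Tmap n Y) t)
      ↔ (X ∩ Y).Nonempty := by
  constructor
  · intro h
    by_contra hne
    rw [Finset.not_nonempty_iff_eq_empty] at hne
    obtain ⟨t, ht, hlt⟩ := h
    have hYsub : Y ⊆ grnd n \ X := by
      intro b hb
      rw [mem_sdiff]
      refine ⟨hY hb, fun hbX => ?_⟩
      have hmem : b ∈ X ∩ Y := mem_inter.mpr ⟨hbX, hb⟩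
      rw [hne] at hmem
      exact notMem_empty b hmem
    have h1 := Tmap_mono sdiff_subset hYsub t
    have h2 := Tmap_compl hX t
    omega
  · rintro ⟨c, hc⟩
    rw [mem_inter] at hc
    have hcg := hX hc.1
    have hcg' := hcg
    simp only [grnd, mem_Icc] at hcg'
    refine ⟨2*c, by simp only [grnd, mem_Icc]; omega, ?_⟩
    have h1 := cnt_Tmap_ge_even hcg hc.1
    have h2 := cnt_Tmap_ge_even hcg hc.2
    have h3 : cnt (grnd (2*n)) (2*c) = 2*n + 1 - 2*c := cnt_grnd (by omega)
    omega

lemma cnt_Zset_self {n a : ℕ} (ha : a ∈ grnd n) :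
    cnt (Zset n a) (2*a - 1) = 1 + (n + 1 - a) := by
  simp only [grnd, mem_Icc] at ha
  rw [cnt_Zset ha.1, cntO_Icc (le_refl a) (fun b hb => by omega)]
  have h : 2*a - 1 ≤ 2*a := by omega
  simp [h]

lemma caseTG {n : ℕ} {X : Finset ℕ} {a : ℕ} (ha : a ∈ grnd n) :
    ∃ t ∈ grnd (2*n), cnt (grnd (2*n)) t < cnt (Tmap n X) t + cnt (Zset n a) t := by
  have ha' := ha
  simp only [grnd, mem_Icc] at ha'
  refine ⟨2*a - 1, by simp only [grnd, mem_Icc]; omega, ?_⟩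
  have h1 := cnt_Tmap_ge_odd (X := X) ha
  have h2 := cnt_Zset_self ha
  have h3 : cnt (grnd (2*n)) (2*a - 1) = 2*n + 1 - (2*a - 1) := cnt_grnd (by omega)
  omega

lemma caseGGaux {n a a' : ℕ} (ha : a ∈ grnd n) (ha' : a' ∈ grnd n) (hle : a ≤ a') :
    ∃ t ∈ grnd (2*n), cnt (grnd (2*n)) t < cnt (Zset n a) t + cnt (Zset n a') t := by
  have hab := ha
  have hab' := ha'
  simp only [grnd, mem_Icc] at hab hab'
  refine ⟨2*a' - 1, by simp only [grnd, mem_Icc]; omega, ?_⟩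
  have h1 := cnt_Zset_self ha'
  have h2 : cntO (Finset.Icc a n) (2*a' - 1) = n + 1 - a' :=
    cntO_Icc hle (fun b hb => by omega)
  have h2' : n + 1 - a' ≤ cnt (Zset n a) (2*a' - 1) := by
    rw [cnt_Zset hab.1, h2]; omega
  have h3 : cnt (grnd (2*n)) (2*a' - 1) = 2*n + 1 - (2*a' - 1) := cnt_grnd (by omega)
  omega

lemma caseGG {n a a' : ℕ} (ha : a ∈ grnd n) (ha' : a' ∈ grnd n) :
    ∃ t ∈ grnd (2*n), cnt (grnd (2*n)) t < cnt (Zset n a) t + cnt (Zset n a') t := by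
  rcases le_total a a' with h | h
  · exact caseGGaux ha ha' h
  · obtain ⟨t, ht, hlt⟩ := caseGGaux ha' ha h
    exact ⟨t, ht, by omega⟩

lemma lemA {n : ℕ} {H K : Set (Finset ℕ)}
    (hH : ∀ X ∈ H, X ⊆ grnd n) :
    (nuA n H ⊆ tauA n K) ↔ ∀ X ∈ H, ∀ Y ∈ K, (X ∩ Y).Nonempty := by
  constructor
  · intro h X hX Y hY
    have hXn : X ∈ nuA n H := ⟨hH X hX, X, hX, subset_rfl⟩
    have := (h hXn).2 Y hY
    rwa [inter_comm] at this
  · intro h Z hZ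
    obtain ⟨hZg, X, hXH, hXZ⟩ := hZ
    refine ⟨hZg, fun Y hY => ?_⟩
    obtain ⟨b, hb⟩ := h X hXH Y hY
    rw [mem_inter] at hb
    exact ⟨b, mem_inter.mpr ⟨hb.2, hXZ hb.1⟩⟩

lemma lemB {m : ℕ} {F1 F2 : Set (Finset ℕ)}
    (h1 : ∀ W ∈ F1, W ⊆ grnd m) :
    (nu' m F1 ⊆ tau' m F2) ↔
      ∀ W ∈ F1, ∀ Y ∈ F2, ∃ t ∈ grnd m, cnt (grnd m) t < cnt W t + cnt Y t := by
  constructor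
  · intro h W hW Y hY
    have hWn : W ∈ nu' m F1 := ⟨h1 W hW, W, hW, fun a _ => le_rfl⟩
    have hne := (h hWn).2 Y hY
    rw [shiftLE] at hne
    push_neg at hne
    obtain ⟨t, htg, hlt⟩ := hne
    refine ⟨t, htg, ?_⟩
    have := cnt_sdiff_add (h1 W hW) t
    omega
  · intro h Z hZ
    obtain ⟨hZg, W, hW, hWZ⟩ := hZ
    refine ⟨hZg, fun Y hY hsh => ?_⟩
    obtain ⟨t, htg, hlt⟩ := h W hW Y hY
    have e1 := hWZ t htg
    have e2 := hsh t htg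
    have e3 := cnt_sdiff_add hZg t
    omega

end Stmt18aux

open Stmt18aux in
theorem stmt18 (n : ℕ) (H K : Set (Finset ℕ))
    (hH : ∀ X ∈ H, X ⊆ grnd n) (hK : ∀ Y ∈ K, Y ⊆ grnd n) :
    nuA n H ⊆ tauA n K ↔
      nu' (2 * n) ((Tmap n '' H) ∪ Gfam n) ⊆
        tau' (2 * n) ((Tmap n '' K) ∪ Gfam n) := by
  have hsub1 : ∀ W ∈ (Tmap n '' H) ∪ Gfam n, W ⊆ grnd (2*n) := by
    rintro W (⟨X, hX, rfl⟩ | ⟨a, ha, rfl⟩)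
    · exact Tmap_subset_grnd (hH X hX)
    · exact Zset_subset_grnd ha
  rw [lemA hH, lemB hsub1]
  constructor
  · rintro h W (⟨X, hXH, rfl⟩ | ⟨a, ha, rfl⟩) Y (⟨Y0, hY0, rfl⟩ | ⟨a', ha', rfl⟩)
    · exact (caseTT (hH X hXH) (hK Y0 hY0)).2 (h X hXH Y0 hY0)
    · exact caseTG ha'
    · obtain ⟨t, ht, hlt⟩ := caseTG (X := Y0) ha
      exact ⟨t, ht, by omega⟩
    · exact caseGG ha ha'
  · intro h X hX Y hY
    exact (caseTT (hH X hX) (hK Y hY)).1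
      (h _ (Or.inl ⟨X, hX, rfl⟩) _ (Or.inl ⟨Y, hY, rfl⟩))
end

section
/- With notation as in the monomorphism construction (A = {1,...,n}, A' = {1,...,2n}, T, G'): for families H, K of subsets of A with images H', K' under T, ν(H) ⊇ τ(K) if and only if ν'(H' ∪ G') ⊇ τ'(K' ∪ G'); i.e., the pair (H, K) is complete iff (H' ∪ G', K' ∪ G') is complete with respect to the shift order. -/
open Finset

namespace S19

lemma even_inj : Function.Injective (fun b : ℕ => 2*b) := fun x y h => by
  have h' : 2*x = 2*y := h
  omega

lemma odd_inj : Function.Injective (fun b : ℕ => 2*b-1) := fun x y h => by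
  have h' : 2*x-1 = 2*y-1 := h
  omega

lemma cnt_step (Z : Finset ℕ) (c : ℕ) :
    cnt Z c = cnt Z (c+1) + (if c ∈ Z then 1 else 0) := by
  unfold cnt
  have h : Z.filter (fun b => c ≤ b)
      = Z.filter (fun b => c+1 ≤ b) ∪ Z.filter (fun b => b = c) := by
    ext b
    by_cases hb : b ∈ Z <;> simp [hb] <;> omega
  rw [h, card_union_of_disjoint]
  · congr 1
    rw [filter_eq']
    split_ifs <;> simp
  · simp only [disjoint_left, mem_filter]
    rintro b ⟨_, hb⟩ ⟨_, rfl⟩; omega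

lemma cnt_anti (Z : Finset ℕ) {c d : ℕ} (h : c ≤ d) : cnt Z d ≤ cnt Z c := by
  apply card_le_card
  intro b hb
  simp only [mem_filter] at hb ⊢
  exact ⟨hb.1, le_trans h hb.2⟩

lemma cnt_le_card (Z : Finset ℕ) (c : ℕ) : cnt Z c ≤ Z.card :=
  card_filter_le _ _

lemma step_odd (Z : Finset ℕ) (a : ℕ) (ha : 1 ≤ a) :
    cnt Z (2*a-1) ≤ cnt Z (2*a) + 1 := by
  have h := cnt_step Z (2*a-1)
  have e : 2*a-1+1 = 2*a := by omega
  rw [e] at h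
  split_ifs at h <;> omega

lemma cnt_zero_of_subset {m : ℕ} {Z : Finset ℕ} (hZ : Z ⊆ grnd m) : cnt Z (m+1) = 0 := by
  unfold cnt
  rw [card_eq_zero, filter_eq_empty_iff]
  intro b hb
  have := hZ hb
  simp only [grnd, mem_Icc] at this
  omega

lemma cnt_grnd_add {m a : ℕ} (h1 : 1 ≤ a) (h2 : a ≤ m+1) : cnt (grnd m) a + a = m + 1 := by
  unfold cnt grnd
  have h : (Finset.Icc 1 m).filter (fun b => a ≤ b) = Finset.Icc a m := by
    ext b; simp only [mem_filter, mem_Icc]; omega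
  rw [h, Nat.card_Icc]
  omega

lemma cnt_sdiff_add {m : ℕ} {Z : Finset ℕ} (hZ : Z ⊆ grnd m) (c : ℕ) :
    cnt (grnd m \ Z) c + cnt Z c = cnt (grnd m) c := by
  unfold cnt
  rw [← card_union_of_disjoint]
  · congr 1
    ext b
    simp only [mem_filter, mem_union, mem_sdiff]
    constructor
    · rintro (⟨⟨hb, _⟩, hc⟩ | ⟨hb, hc⟩)
      · exact ⟨hb, hc⟩
      · exact ⟨hZ hb, hc⟩
    · rintro ⟨hb, hc⟩
      by_cases hbZ : b ∈ Z
      · exact Or.inr ⟨hbZ, hc⟩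
      · exact Or.inl ⟨⟨hb, hbZ⟩, hc⟩
  · simp only [disjoint_left, mem_filter, mem_sdiff]
    rintro b ⟨⟨_, hb⟩, _⟩ ⟨hb', _⟩
    exact hb hb'

lemma cnt_union {X Y : Finset ℕ} (h : Disjoint X Y) (c : ℕ) :
    cnt (X ∪ Y) c = cnt X c + cnt Y c := by
  unfold cnt
  rw [filter_union, card_union_of_disjoint (disjoint_filter_filter h)]

lemma cnt_image {X : Finset ℕ} {f : ℕ → ℕ} (hf : Function.Injective f) (c : ℕ) :
    cnt (X.image f) c = (X.filter (fun b => c ≤ f b)).card := by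
  unfold cnt
  rw [filter_image]
  exact card_image_of_injective _ hf

lemma tmap_cnt (n : ℕ) (X : Finset ℕ) (hX : X ⊆ grnd n) (c : ℕ) :
    cnt (Tmap n X) c
      = (X.filter (fun b => c ≤ 2*b)).card + ((grnd n \ X).filter (fun b => c ≤ 2*b-1)).card := by
  unfold Tmap
  rw [cnt_union, cnt_image even_inj, cnt_image odd_inj]
  simp only [disjoint_left, mem_image]
  rintro x ⟨a, haX, rfl⟩ ⟨b, hb, hab⟩
  simp only [mem_sdiff, grnd, mem_Icc] at hb
  have := hX haX
  simp only [grnd, mem_Icc] at this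
  omega

lemma tmap_cnt_odd (n a : ℕ) (X : Finset ℕ) (hX : X ⊆ grnd n) (h1 : 1 ≤ a) (h2 : a ≤ n+1) :
    cnt (Tmap n X) (2*a-1) + a = n + 1 := by
  rw [tmap_cnt n X hX]
  have e1 : X.filter (fun b => 2*a-1 ≤ 2*b) = X.filter (fun b => a ≤ b) := by
    apply filter_congr; intro b _; first | omega | (simp only [decide_eq_true_eq]; omega)
  have e2 : (grnd n \ X).filter (fun b => 2*a-1 ≤ 2*b-1)
      = (grnd n \ X).filter (fun b => a ≤ b) := by
    apply filter_congr; intro b hb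
    simp only [mem_sdiff, grnd, mem_Icc] at hb
    first | omega | (simp only [decide_eq_true_eq]; omega)
  rw [e1, e2]
  have hs := cnt_sdiff_add hX a
  have hg := cnt_grnd_add h1 h2
  unfold cnt at hs hg
  omega

lemma tmap_cnt_even (n a : ℕ) (X : Finset ℕ) (hX : X ⊆ grnd n) (h1 : 1 ≤ a) (h2 : a ≤ n) :
    cnt (Tmap n X) (2*a) + a = n + (if a ∈ X then 1 else 0) := by
  rw [tmap_cnt n X hX]
  have e1 : X.filter (fun b => 2*a ≤ 2*b) = X.filter (fun b => a ≤ b) := by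
    apply filter_congr; intro b _; first | omega | (simp only [decide_eq_true_eq]; omega)
  have e2 : (grnd n \ X).filter (fun b => 2*a ≤ 2*b-1)
      = (grnd n \ X).filter (fun b => a+1 ≤ b) := by
    apply filter_congr; intro b hb
    simp only [mem_sdiff, grnd, mem_Icc] at hb
    first | omega | (simp only [decide_eq_true_eq]; omega)
  rw [e1, e2]
  have hs := cnt_sdiff_add hX (a+1)
  have hg := cnt_grnd_add (show 1 ≤ a+1 by omega) (show a+1 ≤ n+1 by omega)
  have hstep := cnt_step X a
  unfold cnt at hs hg hstep
  omega

lemma zset_cnt (n a c : ℕ) (h1 : 1 ≤ a) :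
    cnt (Zset n a) c
      = (if c ≤ 2*a then 1 else 0) + ((Finset.Icc a n).filter (fun b => c ≤ 2*b-1)).card := by
  unfold Zset
  rw [insert_eq, cnt_union, cnt_image odd_inj]
  · congr 1
    unfold cnt
    rw [filter_singleton]
    split_ifs <;> simp
  · simp only [disjoint_left, mem_singleton, mem_image]
    rintro x rfl ⟨b, hb, hab⟩
    simp only [mem_Icc] at hb
    omega

lemma zset_card (n a : ℕ) (h1 : 1 ≤ a) (h2 : a ≤ n) : (Zset n a).card + a = n + 2 := by
  unfold Zset
  rw [card_insert_of_notMem, card_image_of_injective _ odd_inj, Nat.card_Icc]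
  · omega
  · simp only [mem_image, mem_Icc]
    rintro ⟨b, hb, hab⟩
    omega

lemma zset_cnt_head_odd (n a : ℕ) (h1 : 1 ≤ a) (h2 : a ≤ n) :
    cnt (Zset n a) (2*a-1) + a = n + 2 := by
  rw [zset_cnt n a _ h1, if_pos (by omega)]
  have h : (Finset.Icc a n).filter (fun b => 2*a-1 ≤ 2*b-1) = Finset.Icc a n := by
    apply filter_true_of_mem
    intro b hb
    simp only [mem_Icc] at hb
    omega
  rw [h, Nat.card_Icc]
  omega

lemma zset_cnt_head_even (n a : ℕ) (h1 : 1 ≤ a) (h2 : a ≤ n) :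
    cnt (Zset n a) (2*a) + a = n + 1 := by
  rw [zset_cnt n a _ h1, if_pos (by omega)]
  have h : (Finset.Icc a n).filter (fun b => 2*a ≤ 2*b-1) = Finset.Icc (a+1) n := by
    ext b
    simp only [mem_filter, mem_Icc]
    omega
  rw [h, Nat.card_Icc]
  omega

lemma zset_cnt_tail_odd (n a c : ℕ) (h1 : 1 ≤ a) (hc1 : a < c) (hc2 : c ≤ n) :
    cnt (Zset n a) (2*c-1) + c = n + 1 := by
  rw [zset_cnt n a _ h1, if_neg (by omega)]
  have h : (Finset.Icc a n).filter (fun b => 2*c-1 ≤ 2*b-1) = Finset.Icc c n := by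
    ext b
    simp only [mem_filter, mem_Icc]
    omega
  rw [h, Nat.card_Icc]
  omega

lemma zset_cnt_tail_even (n a c : ℕ) (h1 : 1 ≤ a) (hc1 : a < c) (hc2 : c ≤ n) :
    cnt (Zset n a) (2*c) + c = n := by
  rw [zset_cnt n a _ h1, if_neg (by omega)]
  have h : (Finset.Icc a n).filter (fun b => 2*c ≤ 2*b-1) = Finset.Icc (c+1) n := by
    ext b
    simp only [mem_filter, mem_Icc]
    omega
  rw [h, Nat.card_Icc]
  omega

lemma mem_grnd {m a : ℕ} : a ∈ grnd m ↔ 1 ≤ a ∧ a ≤ m := by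
  simp [grnd, mem_Icc]

lemma shift_tmap_iff (n : ℕ) (X Z : Finset ℕ) (hX : X ⊆ grnd n) :
    shiftLE (2*n) (Tmap n X) Z ↔
      ∀ a, 1 ≤ a → a ≤ n →
        (n+1 ≤ cnt Z (2*a-1) + a ∧ n ≤ cnt Z (2*a) + a ∧
          (a ∈ X → n+1 ≤ cnt Z (2*a) + a)) := by
  constructor
  · intro h a h1 h2
    have ho := h (2*a-1) (mem_grnd.mpr (by omega))
    have he := h (2*a) (mem_grnd.mpr (by omega))
    have hco := tmap_cnt_odd n a X hX h1 (by omega)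
    have hce := tmap_cnt_even n a X hX h1 h2
    by_cases haX : a ∈ X
    · rw [if_pos haX] at hce
      exact ⟨by omega, by omega, fun _ => by omega⟩
    · rw [if_neg haX] at hce
      exact ⟨by omega, by omega, fun hc => absurd hc haX⟩
  · intro h d hd
    rw [mem_grnd] at hd
    rcases Nat.even_or_odd d with ⟨b, hb⟩ | ⟨b, hb⟩
    · have hd2 : d = 2*b := by omega
      subst hd2
      obtain ⟨_, h2, h3⟩ := h b (by omega) (by omega)
      have hce := tmap_cnt_even n b X hX (by omega) (by omega)
      by_cases hbX : b ∈ X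
      · rw [if_pos hbX] at hce
        have := h3 hbX
        omega
      · rw [if_neg hbX] at hce
        omega
    · have hd2 : d = 2*(b+1)-1 := by omega
      subst hd2
      obtain ⟨h1', _, _⟩ := h (b+1) (by omega) (by omega)
      have hco := tmap_cnt_odd n (b+1) X hX (by omega) (by omega)
      omega

lemma shift_zset_iff (n a : ℕ) (Z : Finset ℕ) (h1 : 1 ≤ a) (h2 : a ≤ n) :
    shiftLE (2*n) (Zset n a) Z ↔
      (n+2 ≤ cnt Z (2*a-1) + a ∧ n+1 ≤ cnt Z (2*a) + a ∧
        ∀ c, a < c → c ≤ n → (n+1 ≤ cnt Z (2*c-1) + c ∧ n ≤ cnt Z (2*c) + c)) := by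
  constructor
  · intro h
    have ho := h (2*a-1) (mem_grnd.mpr (by omega))
    have he := h (2*a) (mem_grnd.mpr (by omega))
    have hco := zset_cnt_head_odd n a h1 h2
    have hce := zset_cnt_head_even n a h1 h2
    refine ⟨by omega, by omega, fun c hc1 hc2 => ?_⟩
    have hto := h (2*c-1) (mem_grnd.mpr (by omega))
    have hte := h (2*c) (mem_grnd.mpr (by omega))
    have hcto := zset_cnt_tail_odd n a c h1 hc1 hc2
    have hcte := zset_cnt_tail_even n a c h1 hc1 hc2
    omega
  · rintro ⟨hh1, hh2, htail⟩ d hd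
    rw [mem_grnd] at hd
    have hcard := zset_card n a h1 h2
    rcases Nat.even_or_odd d with ⟨b, hb⟩ | ⟨b, hb⟩
    · have hd2 : d = 2*b := by omega
      subst hd2
      rcases lt_trichotomy b a with hba | hba | hba
      · -- b < a : cnt (Zset) (2b) ≤ card ≤ cnt Z (2a-1) ≤ cnt Z (2b)
        have hc1 := cnt_le_card (Zset n a) (2*b)
        have hc2 := cnt_anti Z (show 2*b ≤ 2*a-1 by omega)
        omega
      · subst hba
        have := zset_cnt_head_even n b h1 h2
        omega
      · have := zset_cnt_tail_even n a b h1 hba (by omega)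
        have := (htail b hba (by omega)).2
        omega
    · have hd2 : d = 2*(b+1)-1 := by omega
      subst hd2
      rcases le_or_gt (b+1) a with hba | hba
      · have hc1 := cnt_le_card (Zset n a) (2*(b+1)-1)
        have hc2 := cnt_anti Z (show 2*(b+1)-1 ≤ 2*a-1 by omega)
        omega
      · have := zset_cnt_tail_odd n a (b+1) h1 hba (by omega)
        have := (htail (b+1) hba (by omega)).1
        omega

lemma tmap_subset (n : ℕ) (X : Finset ℕ) (hX : X ⊆ grnd n) : Tmap n X ⊆ grnd (2*n) := by
  intro x hx
  unfold Tmap at hx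
  rw [mem_union] at hx
  rw [mem_grnd]
  rcases hx with hx | hx
  · obtain ⟨a, ha, rfl⟩ := mem_image.mp hx
    have := hX ha
    rw [mem_grnd] at this
    omega
  · obtain ⟨a, ha, rfl⟩ := mem_image.mp hx
    rw [mem_sdiff, mem_grnd] at ha
    omega

end S19


theorem stmt19 (n : ℕ) (H K : Set (Finset ℕ))
    (hH : ∀ X ∈ H, X ⊆ grnd n) (hK : ∀ Y ∈ K, Y ⊆ grnd n) :
    tauA n K ⊆ nuA n H ↔
      tau' (2 * n) ((Tmap n '' K) ∪ Gfam n) ⊆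
        nu' (2 * n) ((Tmap n '' H) ∪ Gfam n) := by
  constructor
  · -- forward direction
    intro hL Z hZ
    obtain ⟨hZsub, hZtau⟩ := hZ
    by_cases hall : ∀ a, 1 ≤ a → a ≤ n → cnt Z (2*a-1) + a = n+1
    · -- all deviations zero
      have hDge : ∀ a, 1 ≤ a → a ≤ n → n ≤ cnt Z (2*a) + a := by
        intro a h1 h2
        rcases eq_or_lt_of_le h2 with rfl | h2'
        · omega
        · have ht := hall (a+1) (by omega) (by omega)
          have := S19.cnt_anti Z (show 2*a ≤ 2*(a+1)-1 by omega)
          omega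
      have hDle : ∀ a, 1 ≤ a → a ≤ n → cnt Z (2*a) + a ≤ n + 1 := by
        intro a h1 h2
        have hnext : cnt Z (2*a+1) + a ≤ n := by
          rcases eq_or_lt_of_le h2 with rfl | h2'
          · have h0 := S19.cnt_zero_of_subset hZsub
            omega
          · have ht := hall (a+1) (by omega) (by omega)
            have e : 2*(a+1)-1 = 2*a+1 := by omega
            rw [e] at ht
            omega
        have hstep := S19.cnt_step Z (2*a)
        split_ifs at hstep <;> omega
      have hWtau : ((grnd n).filter (fun a => n+1 ≤ cnt Z (2*a) + a)) ∈ tauA n K := by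
        refine ⟨Finset.filter_subset _ _, fun Y hYK => ?_⟩
        have hns := hZtau (Tmap n Y) (Set.mem_union_left _ ⟨Y, hYK, rfl⟩)
        rw [S19.shift_tmap_iff n Y _ (hK Y hYK)] at hns
        push_neg at hns
        obtain ⟨b, hb1, hb2, hb3⟩ := hns
        have hso := S19.cnt_sdiff_add hZsub (2*b-1)
        have hse := S19.cnt_sdiff_add hZsub (2*b)
        have hgo := S19.cnt_grnd_add (m := 2*n) (show 1 ≤ 2*b-1 by omega) (by omega)
        have hge := S19.cnt_grnd_add (m := 2*n) (show (1:ℕ) ≤ 2*b by omega) (by omega)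
        have hEb := hall b hb1 hb2
        have hDgeb := hDge b hb1 hb2
        have hDleb := hDle b hb1 hb2
        obtain ⟨hbY, hbR⟩ := hb3 (by omega) (by omega)
        refine ⟨b, Finset.mem_inter.mpr ⟨hbY, Finset.mem_filter.mpr ⟨S19.mem_grnd.mpr ⟨hb1, hb2⟩, by omega⟩⟩⟩
      obtain ⟨_, X, hXH, hXW⟩ := hL hWtau
      refine ⟨hZsub, Tmap n X, Set.mem_union_left _ ⟨X, hXH, rfl⟩, ?_⟩
      rw [S19.shift_tmap_iff n X Z (hH X hXH)]
      intro a h1 h2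
      refine ⟨by have := hall a h1 h2; omega, by have := hDge a h1 h2; omega, fun haX => ?_⟩
      exact (Finset.mem_filter.mp (hXW haX)).2
    · push_neg at hall
      obtain ⟨a0, ha01, ha0n, ha0ne⟩ := hall
      have hTne : ((Finset.Icc 1 n).filter (fun a => cnt Z (2*a-1) + a ≠ n+1)).Nonempty :=
        ⟨a0, Finset.mem_filter.mpr ⟨Finset.mem_Icc.mpr ⟨ha01, ha0n⟩, ha0ne⟩⟩
      obtain ⟨haIcc, hane⟩ := Finset.mem_filter.mp (Finset.max'_mem _ hTne)
      set a := ((Finset.Icc 1 n).filter (fun a => cnt Z (2*a-1) + a ≠ n+1)).max' hTne with ha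
      rw [Finset.mem_Icc] at haIcc
      have htail : ∀ c, a < c → c ≤ n → cnt Z (2*c-1) + c = n+1 := by
        intro c hc1 hc2
        by_contra hne
        have hcT : c ≤ ((Finset.Icc 1 n).filter (fun a => cnt Z (2*a-1) + a ≠ n+1)).max' hTne :=
          Finset.le_max' _ c
            (Finset.mem_filter.mpr ⟨Finset.mem_Icc.mpr ⟨by omega, hc2⟩, hne⟩)
        omega
      have htaile : ∀ c, a < c → c ≤ n → n ≤ cnt Z (2*c) + c := by
        intro c hc1 hc2
        rcases eq_or_lt_of_le hc2 with rfl | hc2'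
        · omega
        · have ht := htail (c+1) (by omega) (by omega)
          have := S19.cnt_anti Z (show 2*c ≤ 2*(c+1)-1 by omega)
          omega
      have htailee : ∀ c, a < c → c ≤ n → cnt Z (2*c) + c ≤ n + 1 := by
        intro c hc1 hc2
        have hnext : cnt Z (2*c+1) + c ≤ n := by
          rcases eq_or_lt_of_le hc2 with rfl | hc2'
          · have h0 := S19.cnt_zero_of_subset hZsub
            omega
          · have ht := htail (c+1) (by omega) (by omega)
            have e : 2*(c+1)-1 = 2*c+1 := by omega
            rw [e] at ht
            omega
        have hstep := S19.cnt_step Z (2*c)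
        split_ifs at hstep <;> omega
      rcases lt_or_gt_of_ne hane with hlt | hgt
      · -- negative deviation: contradiction with tau' hypothesis on Zset a
        exfalso
        apply hZtau (Zset n a) (Set.mem_union_right _ ⟨a, S19.mem_grnd.mpr ⟨haIcc.1, haIcc.2⟩, rfl⟩)
        rw [S19.shift_zset_iff n a _ haIcc.1 haIcc.2]
        have hso := S19.cnt_sdiff_add hZsub (2*a-1)
        have hgo := S19.cnt_grnd_add (m := 2*n) (show 1 ≤ 2*a-1 by omega) (by omega)
        have hstep'' := S19.step_odd (grnd (2*n) \ Z) a haIcc.1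
        refine ⟨by omega, by omega, fun c hc1 hc2 => ?_⟩
        have ho := htail c hc1 hc2
        have hte := htailee c hc1 hc2
        have hso' := S19.cnt_sdiff_add hZsub (2*c-1)
        have hse' := S19.cnt_sdiff_add hZsub (2*c)
        have hgo' := S19.cnt_grnd_add (m := 2*n) (show 1 ≤ 2*c-1 by omega) (by omega)
        have hge' := S19.cnt_grnd_add (m := 2*n) (show (1:ℕ) ≤ 2*c by omega) (by omega)
        exact ⟨by omega, by omega⟩
      · -- positive deviation: Z dominates Zset a
        refine ⟨hZsub, Zset n a, Set.mem_union_right _ ⟨a, S19.mem_grnd.mpr ⟨haIcc.1, haIcc.2⟩, rfl⟩, ?_⟩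
        rw [S19.shift_zset_iff n a Z haIcc.1 haIcc.2]
        have hstep := S19.step_odd Z a haIcc.1
        exact ⟨by omega, by omega,
          fun c hc1 hc2 => ⟨by have := htail c hc1 hc2; omega, htaile c hc1 hc2⟩⟩
  · -- backward direction
    intro hR W hWmem
    obtain ⟨hWsub, hWtau⟩ := hWmem
    have hTW := S19.tmap_subset n W hWsub
    have hmem : Tmap n W ∈ tau' (2*n) ((Tmap n '' K) ∪ Gfam n) := by
      refine ⟨hTW, ?_⟩
      rintro Y' (⟨Y, hYK, rfl⟩ | ⟨a, ha, rfl⟩)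
      · intro hcon
        rw [S19.shift_tmap_iff n Y _ (hK Y hYK)] at hcon
        obtain ⟨b, hbW⟩ := hWtau Y hYK
        rw [Finset.mem_inter] at hbW
        obtain ⟨hbY, hbW⟩ := hbW
        have hbg := S19.mem_grnd.mp (hWsub hbW)
        obtain ⟨_, _, h3⟩ := hcon b hbg.1 hbg.2
        have h3' := h3 hbY
        have hse := S19.cnt_sdiff_add hTW (2*b)
        have hge := S19.cnt_grnd_add (m := 2*n) (show (1:ℕ) ≤ 2*b by omega) (by omega)
        have hce := S19.tmap_cnt_even n b W hWsub hbg.1 hbg.2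
        rw [if_pos hbW] at hce
        omega
      · intro hcon
        have hag := S19.mem_grnd.mp ha
        rw [S19.shift_zset_iff n a _ hag.1 hag.2] at hcon
        have hso := S19.cnt_sdiff_add hTW (2*a-1)
        have hgo := S19.cnt_grnd_add (m := 2*n) (show 1 ≤ 2*a-1 by omega) (by omega)
        have hco := S19.tmap_cnt_odd n a W hWsub hag.1 (by omega)
        omega
    obtain ⟨_, Y', hY', hs⟩ := hR hmem
    rcases hY' with ⟨X, hXH, rfl⟩ | ⟨a, ha, rfl⟩
    · refine ⟨hWsub, X, hXH, fun x hx => ?_⟩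
      have hxg := S19.mem_grnd.mp (hH X hXH hx)
      rw [S19.shift_tmap_iff n X _ (hH X hXH)] at hs
      obtain ⟨_, _, h3⟩ := hs x hxg.1 hxg.2
      have h3' := h3 hx
      have hce := S19.tmap_cnt_even n x W hWsub hxg.1 hxg.2
      by_cases hxW : x ∈ W
      · exact hxW
      · rw [if_neg hxW] at hce
        omega
    · exfalso
      have hag := S19.mem_grnd.mp ha
      rw [S19.shift_zset_iff n a _ hag.1 hag.2] at hs
      have hco := S19.tmap_cnt_odd n a W hWsub hag.1 (by omega)
      omega
end
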